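/- arXiv:2409.16031 — 3 statements merged into one kernel-verified Lean document; each statement's English description precedes it below -/
import Mathlib

section
/- Let X be a real Hilbert space, K ⊆ X nonempty closed convex, A : X → X strongly monotone with constant m_A > 0, φ : X → ℝ convex and bounded below by an affine function (i.e., ∃ g ∈ X, c ∈ ℝ such that φ(v) ≥ ⟪g, v⟫ + c for all v), and f ∈ X. If {u_n} ⊆ X and {ε_n} ⊆ [0, ∞) are sequences such that for all n and all v ∈ K: ⟪A u_n, v - u_n⟫ + φ(v) - φ(u_n) + ε_n (1 + ‖v - u_n‖) ≥ ⟪f, v - u_n⟫, and ε_n → 0, then the sequence {u_n} is bounded in X. -/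
open Filter Topology
open scoped RealInnerProductSpace

theorem stmt3 {X : Type*} [NormedAddCommGroup X] [InnerProductSpace ℝ X]
    (K : Set X) (hK : K.Nonempty) (hKc : IsClosed K) (hKconv : Convex ℝ K)
    (A : X → X) (mA : ℝ) (hmA : 0 < mA)
    (hsm : ∀ u v : X, mA * ‖u - v‖ ^ 2 ≤ ⟪A u - A v, u - v⟫)
    (φ : X → ℝ) (hφ : ConvexOn ℝ Set.univ φ)
    (g : X) (c : ℝ) (hφbd : ∀ v : X, ⟪g, v⟫ + c ≤ φ v)
    (f : X) (u : ℕ → X) (ε : ℕ → ℝ) (hε0 : ∀ n, 0 ≤ ε n)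
    (hεlim : Tendsto ε atTop (𝓝 0))
    (hvi : ∀ n, ∀ v ∈ K,
      ⟪f, v - u n⟫ ≤ ⟪A (u n), v - u n⟫ + φ v - φ (u n) + ε n * (1 + ‖v - u n‖)) :
    ∃ C : ℝ, ∀ n, ‖u n‖ ≤ C := by
  obtain ⟨v₀, hv₀⟩ := hK
  obtain ⟨E, hE⟩ := hεlim.bddAbove_range
  have hE' : ∀ n, ε n ≤ E := fun n => hE ⟨n, rfl⟩
  have hE0 : (0 : ℝ) ≤ E := le_trans (hε0 0) (hE' 0)
  set a : ℝ := ‖f‖ + ‖A v₀‖ + ‖g‖ + E with ha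
  have ha0 : 0 ≤ a := by positivity
  set b : ℝ := max (φ v₀ - ⟪g, v₀⟫ - c + E) 0 with hb
  have hb0 : 0 ≤ b := le_max_right _ _
  refine ⟨‖v₀‖ + max 1 ((a + b) / mA), fun n => ?_⟩
  set d : ℝ := ‖u n - v₀‖ with hd
  have hd0 : 0 ≤ d := norm_nonneg _
  have key : mA * d ^ 2 ≤ a * d + b := by
    have h1 := hvi n v₀ hv₀
    have h2 := hsm (u n) v₀
    have h3 : ⟪A (u n) - A v₀, u n - v₀⟫ =
        -⟪A (u n), v₀ - u n⟫ - ⟪A v₀, u n - v₀⟫ := by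
      rw [inner_sub_left]
      have : (v₀ - u n) = -(u n - v₀) := by abel
      rw [this, inner_neg_right]; ring
    rw [norm_sub_rev, ← hd] at h1
    rw [← hd] at h2
    have hf : -⟪f, v₀ - u n⟫ ≤ ‖f‖ * d := by
      have h := real_inner_le_norm f (u n - v₀)
      have heq : ⟪f, u n - v₀⟫ = -⟪f, v₀ - u n⟫ := by
        rw [← inner_neg_right]; congr 1; abel
      rw [heq, ← hd] at h
      exact h
    have hAv : -⟪A v₀, u n - v₀⟫ ≤ ‖A v₀‖ * d := by
      have h := abs_real_inner_le_norm (A v₀) (u n - v₀)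
      have := neg_abs_le ⟪A v₀, u n - v₀⟫
      nlinarith [abs_nonneg ⟪A v₀, u n - v₀⟫]
    have hg : ⟪g, v₀ - u n⟫ ≤ ‖g‖ * d := by
      have h := real_inner_le_norm g (v₀ - u n)
      rwa [norm_sub_rev] at h
    have hgsplit : ⟪g, v₀ - u n⟫ = ⟪g, v₀⟫ - ⟪g, u n⟫ := by
      rw [inner_sub_right]
    have hφn := hφbd (u n)
    have hεb : ε n * (1 + d) ≤ E + E * d := by
      have := mul_le_mul_of_nonneg_right (hE' n) (by linarith : (0:ℝ) ≤ 1 + d)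
      nlinarith
    have hbmax : φ v₀ - ⟪g, v₀⟫ - c + E ≤ b := le_max_left _ _
    nlinarith [hd0]
  have hdle : d ≤ max 1 ((a + b) / mA) := by
    rcases le_or_gt d 1 with h | h
    · exact le_trans h (le_max_left _ _)
    · have hdpos : 0 < d := lt_trans one_pos h
      have : mA * d * d ≤ (a + b) * d := by nlinarith
      have h2 : mA * d ≤ a + b := le_of_mul_le_mul_right this hdpos
      have : d ≤ (a + b) / mA := by
        rw [le_div_iff₀ hmA]; linarith
      exact le_trans this (le_max_right _ _)
  have := norm_sub_norm_le (u n) v₀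
  simp only [← hd] at this
  linarith
end

section
/- Let X be a real Hilbert space, A : X → X strongly monotone with constant m_A > 0, φ : X → ℝ convex and lower semicontinuous, f ∈ X, and ũ ∈ X. Suppose {u_n} ⊆ X satisfies u_n ⇀ ũ weakly in X and, for each n, ⟪A u_n, ũ - u_n⟫ + φ(ũ) - φ(u_n) ≥ ⟪f, ũ - u_n⟫. Then u_n → ũ strongly in X. -/
/-!
Put `v n = u n - w0`. Strong monotonicity of `A` and the variational inequality combine to
`mA ‖v n‖² + φ (w0 + v n) ≤ φ w0 + ⟪A w0 - f, -v n⟫`, whose last term tends to `0` by weak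
convergence. Lower semicontinuity of `φ` at `w0` and convexity give a lower bound
`φ (w0 + v) ≥ φ w0 - 1 - b ‖v‖`, so `v` is bounded (uniform boundedness is unavailable:
`X` need not be complete).
If `‖v n‖ ≥ ε` along a subsequence, the Banach–Saks selection of a further subsequence with
almost orthogonal terms makes the Cesàro means of `w0 + v n` converge strongly to `w0`; Jensen's
inequality and lower semicontinuity at `w0` then give `φ w0 ≤ φ w0 - mA ε²`, a contradiction.
-/
open Filter Topology Finset
open scoped RealInnerProductSpace

theorem ConvexOn.exists_sub_one_sub_mul_norm_le {E : Type*} [NormedAddCommGroup E]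
    [NormedSpace ℝ E] {φ : E → ℝ} {x : E} (hφ : ConvexOn ℝ Set.univ φ)
    (hx : LowerSemicontinuousAt φ x) :
    ∃ b : ℝ, ∀ v, φ x - 1 - b * ‖v‖ ≤ φ (x + v) := by
  obtain ⟨δ, hδ, hball⟩ := Metric.eventually_nhds_iff.1 (hx (φ x - 1) (by linarith))
  refine ⟨2 / δ, fun v => ?_⟩
  have hv := norm_nonneg v
  -- `‖t • v‖ < δ`, and `t * (1 + 2 / δ * ‖v‖) = 1`
  set t := δ / (δ + 2 * ‖v‖) with ht
  have ht0 : 0 < t := by positivity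
  have ht1 : t ≤ 1 := div_le_one_of_le₀ (by linarith) (by positivity)
  have hnear : φ x - 1 < φ (x + t • v) := by
    refine hball ?_
    rw [dist_eq_norm, add_sub_cancel_left, norm_smul, Real.norm_of_nonneg ht0.le, ht,
      div_mul_eq_mul_div, div_lt_iff₀ (by positivity)]
    nlinarith
  have hconv : φ (x + t • v) ≤ (1 - t) * φ x + t * φ (x + v) := by
    simpa [smul_add, ← add_assoc, ← add_smul] using
      hφ.2 (Set.mem_univ x) (Set.mem_univ (x + v)) (sub_nonneg.2 ht1) ht0.le (sub_add_cancel 1 t)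
  have hscale : t * (1 + 2 / δ * ‖v‖) = 1 := by
    rw [ht]; field_simp
  nlinarith

theorem le_one_add_of_mul_sq_le_add_mul {m K L r : ℝ} (hm : 0 < m) (hr : 0 ≤ r)
    (h : m * r ^ 2 ≤ K + L * r) : r ≤ 1 + (|K| + |L|) / m := by
  have hq : 0 ≤ (|K| + |L|) / m := by positivity
  rcases le_or_gt r 1 with hr1 | hr1
  · linarith
  · have : m * r ≤ |K| + |L| := by
      nlinarith [le_abs_self K, le_abs_self L, neg_abs_le L, abs_nonneg K]
    have : r ≤ (|K| + |L|) / m := by rw [le_div_iff₀ hm]; linarith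
    linarith

theorem ConvexOn.le_of_tendsto_cesaro {E : Type*} [AddCommGroup E] [Module ℝ E]
    [TopologicalSpace E] {φ : E → ℝ} {x : E} (hφ : ConvexOn ℝ Set.univ φ)
    (hx : LowerSemicontinuousAt φ x) {y : ℕ → E} {b : ℕ → ℝ} {β : ℝ}
    (hy : Tendsto (fun k : ℕ => (k⁻¹ : ℝ) • ∑ i ∈ range k, y i) atTop (𝓝 x))
    (hb : ∀ i, φ (y i) ≤ b i)
    (hβ : Tendsto (fun k : ℕ => (k⁻¹ : ℝ) * ∑ i ∈ range k, b i) atTop (𝓝 β)) :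
    φ x ≤ β := by
  have hjensen : ∀ k : ℕ, 0 < k →
      φ ((k⁻¹ : ℝ) • ∑ i ∈ range k, y i) ≤ (k⁻¹ : ℝ) * ∑ i ∈ range k, b i := by
    intro k hk
    have hw : ∑ _i ∈ range k, (k⁻¹ : ℝ) = 1 := by
      rw [sum_const, card_range, nsmul_eq_mul, mul_inv_cancel₀ (by positivity)]
    calc φ ((k⁻¹ : ℝ) • ∑ i ∈ range k, y i) = φ (∑ i ∈ range k, (k⁻¹ : ℝ) • y i) := by
          rw [smul_sum]
      _ ≤ ∑ i ∈ range k, (k⁻¹ : ℝ) • φ (y i) :=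
          hφ.map_sum_le (fun _ _ => by positivity) hw (fun _ _ => Set.mem_univ _)
      _ ≤ (k⁻¹ : ℝ) * ∑ i ∈ range k, b i := by
          rw [mul_sum]
          exact sum_le_sum fun i _ => mul_le_mul_of_nonneg_left (hb i) (by positivity)
  refine le_of_forall_lt_imp_le_of_dense fun a ha => ge_of_tendsto hβ ?_
  filter_upwards [hy.eventually (hx a ha), eventually_gt_atTop 0] with k hk hk0
  exact hk.le.trans (hjensen k hk0)

section BanachSaks

variable {X : Type*} [NormedAddCommGroup X] [InnerProductSpace ℝ X]

theorem exists_strictMono_inner_le_geometric {v : ℕ → X}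
    (hv : ∀ w, Tendsto (fun n => ⟪v n, w⟫) atTop (𝓝 0)) :
    ∃ g : ℕ → ℕ, StrictMono g ∧ ∀ i j, i < j → ⟪v (g i), v (g j)⟫ ≤ (1 / 2) ^ i := by
  obtain ⟨g, -, hg⟩ := exists_seq_of_forall_finset_exists (fun _ => True)
    (fun m n => m < n ∧ ⟪v m, v n⟫ ≤ (1 / 2) ^ m) fun s _ => by
      have hlate : ∀ᶠ n in atTop, ∀ m ∈ s, m < n ∧ ⟪v m, v n⟫ ≤ (1 / 2) ^ m := by
        refine (eventually_all_finset s).2 fun m _ => ?_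
        have hsmall := (hv (v m)).eventually (gt_mem_nhds (by positivity : (0 : ℝ) < (1 / 2) ^ m))
        filter_upwards [eventually_gt_atTop m, hsmall] with n hmn hn
        exact ⟨hmn, by rw [real_inner_comm]; exact hn.le⟩
      obtain ⟨n, hn⟩ := hlate.exists
      exact ⟨n, trivial, hn⟩
  have hmono : StrictMono g := fun i j hij => (hg i j hij).1
  refine ⟨g, hmono, fun i j hij => (hg i j hij).2.trans ?_⟩
  exact pow_le_pow_of_le_one (by norm_num) (by norm_num) hmono.le_apply

theorem norm_sum_range_sq_le_of_inner_le {w : ℕ → X} {M : ℝ} (hM : ∀ n, ‖w n‖ ≤ M)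
    (hw : ∀ i j, i < j → ⟪w i, w j⟫ ≤ (1 / 2) ^ i) (k : ℕ) :
    ‖∑ i ∈ range k, w i‖ ^ 2 ≤ k * (M ^ 2 + 4) := by
  induction k with
  | zero => simp
  | succ k ih =>
    have hcross : ⟪∑ i ∈ range k, w i, w k⟫ ≤ 2 := by
      rw [sum_inner]
      exact (sum_le_sum fun i hi => hw i k (mem_range.1 hi)).trans (sum_geometric_two_le k)
    have hsq : ‖w k‖ ^ 2 ≤ M ^ 2 := pow_le_pow_left₀ (norm_nonneg _) (hM k) 2
    rw [sum_range_succ, norm_add_sq_real]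
    push_cast
    linarith

theorem tendsto_inv_smul_zero_of_norm_sq_le {S : ℕ → X} {C : ℝ} (hS : ∀ k, ‖S k‖ ^ 2 ≤ k * C) :
    Tendsto (fun k : ℕ => (k⁻¹ : ℝ) • S k) atTop (𝓝 0) := by
  rw [tendsto_zero_iff_norm_tendsto_zero]
  have hlim : Tendsto (fun k : ℕ => √(C / k)) atTop (𝓝 0) := by
    simpa using (tendsto_const_div_atTop_nhds_zero_nat C).sqrt
  refine squeeze_zero (fun _ => norm_nonneg _) (fun k => ?_) hlim
  rcases Nat.eq_zero_or_pos k with rfl | hk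
  · simp
  · refine Real.le_sqrt_of_sq_le ?_
    rw [norm_smul, mul_pow, norm_inv, Real.norm_natCast]
    calc ((k : ℝ)⁻¹) ^ 2 * ‖S k‖ ^ 2 ≤ ((k : ℝ)⁻¹) ^ 2 * (k * C) := by gcongr; exact hS k
      _ = C / k := by field_simp [hk.ne']

theorem exists_strictMono_tendsto_cesaro_zero {v : ℕ → X} {M : ℝ} (hM : ∀ n, ‖v n‖ ≤ M)
    (hv : ∀ w, Tendsto (fun n => ⟪v n, w⟫) atTop (𝓝 0)) :
    ∃ g : ℕ → ℕ, StrictMono g ∧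
      Tendsto (fun k : ℕ => (k⁻¹ : ℝ) • ∑ i ∈ range k, v (g i)) atTop (𝓝 0) := by
  obtain ⟨g, hg, hinner⟩ := exists_strictMono_inner_le_geometric hv
  exact ⟨g, hg, tendsto_inv_smul_zero_of_norm_sq_le
    (norm_sum_range_sq_le_of_inner_le (fun n => hM (g n)) hinner)⟩

end BanachSaks

theorem exists_norm_le_of_mul_sq_norm_add_le {E : Type*} [NormedAddCommGroup E]
    [NormedSpace ℝ E] {φ : E → ℝ} {x : E} {m : ℝ} (hm : 0 < m) (hφ : ConvexOn ℝ Set.univ φ)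
    (hx : LowerSemicontinuousAt φ x) {v : ℕ → E} {c : ℕ → ℝ} (hc : BddAbove (Set.range c))
    (hkey : ∀ n, m * ‖v n‖ ^ 2 + φ (x + v n) ≤ φ x + c n) :
    ∃ M, ∀ n, ‖v n‖ ≤ M := by
  obtain ⟨b, hb⟩ := hφ.exists_sub_one_sub_mul_norm_le hx
  obtain ⟨C, hC⟩ := hc
  refine ⟨1 + (|C + 1| + |b|) / m, fun n => le_one_add_of_mul_sq_le_add_mul hm (norm_nonneg _) ?_⟩
  linarith [hkey n, hb (v n), hC ⟨n, rfl⟩]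

theorem tendsto_zero_of_mul_sq_norm_add_le {X : Type*} [NormedAddCommGroup X]
    [InnerProductSpace ℝ X] {φ : X → ℝ} {x : X} {m : ℝ} (hm : 0 < m)
    (hφ : ConvexOn ℝ Set.univ φ) (hx : LowerSemicontinuousAt φ x) {v : ℕ → X} {c : ℕ → ℝ}
    (hv : ∀ w, Tendsto (fun n => ⟪v n, w⟫) atTop (𝓝 0)) (hc : Tendsto c atTop (𝓝 0))
    (hkey : ∀ n, m * ‖v n‖ ^ 2 + φ (x + v n) ≤ φ x + c n) :
    Tendsto v atTop (𝓝 0) := by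
  obtain ⟨M, hM⟩ := exists_norm_le_of_mul_sq_norm_add_le hm hφ hx hc.bddAbove_range hkey
  by_contra hnot
  obtain ⟨ε, hε, hfar⟩ : ∃ ε > 0, ∃ᶠ n in atTop, ε ≤ ‖v n‖ := by
    simpa [Metric.tendsto_nhds, frequently_atTop] using hnot
  obtain ⟨ns, hns, hεns⟩ := extraction_of_frequently_atTop hfar
  obtain ⟨g, hg, hmean⟩ := exists_strictMono_tendsto_cesaro_zero (fun n => hM (ns n))
    fun w => (hv w).comp hns.tendsto_atTop
  have hy : Tendsto (fun k : ℕ => (k⁻¹ : ℝ) • ∑ i ∈ range k, (x + v (ns (g i)))) atTop (𝓝 x) := by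
    simpa [sum_add_distrib, smul_add] using tendsto_const_nhds.cesaro_smul.add hmean
  have hb : ∀ i, φ (x + v (ns (g i))) ≤ φ x + c (ns (g i)) - m * ε ^ 2 := fun i => by
    have := mul_le_mul_of_nonneg_left (pow_le_pow_left₀ hε.le (hεns (g i)) 2) hm.le
    linarith [hkey (ns (g i))]
  have hβ : Tendsto (fun i => φ x + c (ns (g i)) - m * ε ^ 2) atTop (𝓝 (φ x - m * ε ^ 2)) := by
    simpa using ((hc.comp (hns.comp hg).tendsto_atTop).const_add (φ x)).sub_const (m * ε ^ 2)
  have hle := hφ.le_of_tendsto_cesaro hx hy hb hβ.cesaro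
  nlinarith [mul_pos hm (pow_pos hε 2)]

theorem stmt4 {X : Type*} [NormedAddCommGroup X] [InnerProductSpace ℝ X]
    (A : X → X) (mA : ℝ) (hmA : 0 < mA)
    (hsm : ∀ u v : X, mA * ‖u - v‖ ^ 2 ≤ ⟪A u - A v, u - v⟫)
    (φ : X → ℝ) (hφ : ConvexOn ℝ Set.univ φ) (hφlsc : LowerSemicontinuous φ)
    (f : X) (w0 : X) (u : ℕ → X)
    (hweak : ∀ w : X, Tendsto (fun n => ⟪u n, w⟫) atTop (𝓝 ⟪w0, w⟫))
    (hvi : ∀ n, ⟪f, w0 - u n⟫ ≤ ⟪A (u n), w0 - u n⟫ + φ w0 - φ (u n)) :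
    Tendsto u atTop (𝓝 w0) := by
  have hv : ∀ w, Tendsto (fun n => ⟪u n - w0, w⟫) atTop (𝓝 0) := fun w => by
    simpa [inner_sub_left] using (hweak w).sub_const ⟪w0, w⟫
  have hc : Tendsto (fun n => ⟪A w0 - f, w0 - u n⟫) atTop (𝓝 0) := by
    simpa [inner_sub_right, real_inner_comm] using
      (hweak (A w0 - f)).const_sub ⟪A w0 - f, w0⟫
  have hkey : ∀ n, mA * ‖u n - w0‖ ^ 2 + φ (w0 + (u n - w0)) ≤ φ w0 + ⟪A w0 - f, w0 - u n⟫ := by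
    intro n
    have hmono : ⟪A (u n) - A w0, u n - w0⟫ = ⟪A w0, w0 - u n⟫ - ⟪A (u n), w0 - u n⟫ := by
      rw [← neg_sub w0 (u n), inner_neg_right, inner_sub_left]
      ring
    rw [add_sub_cancel, inner_sub_left]
    linarith [hsm (u n) w0, hvi n]
  exact tendsto_sub_nhds_zero_iff.1
    (tendsto_zero_of_mul_sq_norm_add_le hmA hφ (hφlsc w0) hv hc hkey)
end

section
/- Let X be a real Hilbert space, K ⊆ X nonempty closed convex, A : X → X Lipschitz with constant M_A and strongly monotone with constant m_A > 0, φ : X → ℝ convex and Lipschitz continuous on bounded sets, f ∈ X, and let u ∈ K be the solution of the variational inequality ⟪A u, v - u⟫ + φ(v) - φ(u) ≥ ⟪f, v - u⟫ for all v ∈ K. If a sequence {u_n} ⊆ X converges strongly to u, then: (a) dist(u_n, K) → 0, and (b) there exists a sequence ε_n ≥ 0 with ε_n → 0 such that ⟪A u_n, v - u_n⟫ + φ(v) - φ(u_n) + ε_n(1 + ‖v - u_n‖) ≥ ⟪f, v - u_n⟫ for all v ∈ K and all n. -/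
open Filter Topology
open scoped RealInnerProductSpace

/-!
The solution `u` satisfies the inequality exactly, and every term of the inequality moves
continuously with the point at which it is written: `A` is Lipschitz and `φ` is continuous, being
Lipschitz on bounded sets. Moving from `u` to `w` therefore costs at most a multiple of
`1 + ‖v - w‖` by a defect that vanishes at `w = u`; along `uₙ → u` it tends to zero.
-/

lemma Metric.tendsto_infDist_zero_of_tendsto {α ι : Type*} [PseudoMetricSpace α] {l : Filter ι}
    {K : Set α} {x : ι → α} {u : α} (hu : u ∈ K) (hx : Tendsto x l (𝓝 u)) :
    Tendsto (fun i => Metric.infDist (x i) K) l (𝓝 0) := by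
  have h := ((Metric.continuous_infDist_pt K).tendsto u).comp hx
  rwa [Metric.infDist_zero_of_mem hu] at h

lemma continuous_of_forall_lipschitz_on_closedBall {E : Type*} [SeminormedAddCommGroup E]
    {φ : E → ℝ} (hφ : ∀ D : ℝ, 0 < D → ∃ L : ℝ, 0 < L ∧ ∀ u v : E, ‖u‖ ≤ D → ‖v‖ ≤ D →
      |φ u - φ v| ≤ L * ‖u - v‖) :
    Continuous φ := by
  refine continuous_iff_continuousAt.mpr fun x => ?_
  obtain ⟨L, -, hL⟩ := hφ (‖x‖ + 1) (by positivity)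
  have hLip : LipschitzOnWith L.toNNReal φ (Metric.closedBall 0 (‖x‖ + 1)) :=
    LipschitzOnWith.of_dist_le' fun u hu v hv => by
      rw [mem_closedBall_zero_iff] at hu hv
      simpa only [dist_eq_norm, Real.norm_eq_abs] using hL u v hu hv
  exact hLip.continuousOn.continuousAt
    (Metric.closedBall_mem_nhds_of_mem (by simp))

section Defect

variable {X : Type*} [NormedAddCommGroup X]
  (A : X → X) (φ : X → ℝ) (f u : X)

/-- Moving the base point of the variational inequality from `u` to `w` changes `A` by the first
term (paid per unit of `‖v - w‖`), the linear terms by the second and `φ` by the third. -/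
noncomputable def viDefect (w : X) : ℝ :=
  ‖A w - A u‖ + (‖A u‖ + ‖f‖) * ‖w - u‖ + |φ w - φ u|

variable {A φ f u}

lemma viDefect_nonneg (w : X) : 0 ≤ viDefect A φ f u w := by
  unfold viDefect; positivity

lemma tendsto_viDefect {ι : Type*} {l : Filter ι} {w : ι → X}
    (hA : ContinuousAt A u) (hφ : ContinuousAt φ u) (hw : Tendsto w l (𝓝 u)) :
    Tendsto (fun i => viDefect A φ f u (w i)) l (𝓝 0) := by
  have hcont : ContinuousAt (viDefect A φ f u) u := by
    unfold viDefect; fun_prop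
  simpa [Function.comp_def, viDefect] using hcont.tendsto.comp hw

lemma inner_le_add_viDefect_mul [InnerProductSpace ℝ X] {v : X}
    (hv : ⟪f, v - u⟫ ≤ ⟪A u, v - u⟫ + φ v - φ u) (w : X) :
    ⟪f, v - w⟫ ≤ ⟪A w, v - w⟫ + φ v - φ w + viDefect A φ f u w * (1 + ‖v - w‖) := by
  have hf : ⟪f, v - w⟫ ≤ ⟪f, v - u⟫ + ‖f‖ * ‖w - u‖ := by
    have h := real_inner_le_norm f (u - w)
    rw [norm_sub_rev] at h
    rw [show v - w = (v - u) + (u - w) by abel, inner_add_right]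
    linarith
  have hAu : ⟪A u, v - u⟫ ≤ ⟪A w, v - w⟫ + ‖A w - A u‖ * ‖v - w‖ + ‖A u‖ * ‖w - u‖ := by
    have hsplit : ⟪A u, v - u⟫ = ⟪A w, v - w⟫ + ⟪A u - A w, v - w⟫ + ⟪A u, w - u⟫ := by
      simp only [inner_sub_left, inner_sub_right]; ring
    have h₁ := real_inner_le_norm (A u - A w) (v - w)
    have h₂ := real_inner_le_norm (A u) (w - u)
    rw [norm_sub_rev] at h₁
    linarith
  have hφ : φ w - φ u ≤ |φ w - φ u| := le_abs_self _
  have hA : ‖A w - A u‖ * ‖v - w‖ ≤ viDefect A φ f u w * ‖v - w‖ := by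
    gcongr
    unfold viDefect
    have : 0 ≤ (‖A u‖ + ‖f‖) * ‖w - u‖ := by positivity
    linarith [abs_nonneg (φ w - φ u)]
  unfold viDefect at hA ⊢
  linarith [norm_nonneg (A w - A u)]

end Defect

theorem stmt7_general {X : Type*} [NormedAddCommGroup X] [InnerProductSpace ℝ X]
    (K : Set X)
    (A : X → X) (MA : ℝ)
    (hlip : ∀ u v : X, ‖A u - A v‖ ≤ MA * ‖u - v‖)
    (φ : X → ℝ)
    (hφloc : ∀ D : ℝ, 0 < D → ∃ L : ℝ, 0 < L ∧ ∀ u v : X, ‖u‖ ≤ D → ‖v‖ ≤ D →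
      |φ u - φ v| ≤ L * ‖u - v‖)
    (f : X) (u : X) (huK : u ∈ K)
    (hvi : ∀ v ∈ K, ⟪f, v - u⟫ ≤ ⟪A u, v - u⟫ + φ v - φ u)
    (un : ℕ → X) (hconv : Tendsto un atTop (𝓝 u)) :
    Tendsto (fun n => Metric.infDist (un n) K) atTop (𝓝 0) ∧
    ∃ ε : ℕ → ℝ, (∀ n, 0 ≤ ε n) ∧ Tendsto ε atTop (𝓝 0) ∧
      ∀ n, ∀ v ∈ K,
        ⟪f, v - un n⟫ ≤ ⟪A (un n), v - un n⟫ + φ v - φ (un n)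
          + ε n * (1 + ‖v - un n‖) := by
  have hA : Continuous A :=
    (LipschitzWith.of_dist_le' fun x y => by simpa only [dist_eq_norm] using hlip x y).continuous
  have hφ : Continuous φ := continuous_of_forall_lipschitz_on_closedBall hφloc
  refine ⟨Metric.tendsto_infDist_zero_of_tendsto huK hconv,
    fun n => viDefect A φ f u (un n), fun n => viDefect_nonneg (un n),
    tendsto_viDefect hA.continuousAt hφ.continuousAt hconv,
    fun n v hv => inner_le_add_viDefect_mul (hvi v hv) (un n)⟩

theorem stmt7 {X : Type*} [NormedAddCommGroup X] [InnerProductSpace ℝ X]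
    (K : Set X) (hK : K.Nonempty) (hKc : IsClosed K) (hKconv : Convex ℝ K)
    (A : X → X) (mA MA : ℝ) (hmA : 0 < mA) (hMA : 0 < MA)
    (hsm : ∀ u v : X, mA * ‖u - v‖ ^ 2 ≤ ⟪A u - A v, u - v⟫)
    (hlip : ∀ u v : X, ‖A u - A v‖ ≤ MA * ‖u - v‖)
    (φ : X → ℝ) (hφ : ConvexOn ℝ Set.univ φ)
    (hφloc : ∀ D : ℝ, 0 < D → ∃ L : ℝ, 0 < L ∧ ∀ u v : X, ‖u‖ ≤ D → ‖v‖ ≤ D →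
      |φ u - φ v| ≤ L * ‖u - v‖)
    (f : X) (u : X) (huK : u ∈ K)
    (hvi : ∀ v ∈ K, ⟪f, v - u⟫ ≤ ⟪A u, v - u⟫ + φ v - φ u)
    (un : ℕ → X) (hconv : Tendsto un atTop (𝓝 u)) :
    Tendsto (fun n => Metric.infDist (un n) K) atTop (𝓝 0) ∧
    ∃ ε : ℕ → ℝ, (∀ n, 0 ≤ ε n) ∧ Tendsto ε atTop (𝓝 0) ∧
      ∀ n, ∀ v ∈ K,
        ⟪f, v - un n⟫ ≤ ⟪A (un n), v - un n⟫ + φ v - φ (un n)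
          + ε n * (1 + ‖v - un n‖) :=
  stmt7_general K A MA hlip φ hφloc f u huK hvi un hconv
end
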